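/- arXiv:2307.01295 — 2 statements merged into one kernel-verified Lean document; each statement's English description precedes it below -/
import Mathlib

section
/- For the chain type polynomial with all a_i ≥ 2, the reduced weights q_i = \sum_{j=i}^N (-1)^{j-i}/(a_1⋯a_j) satisfy 0 < q_i ≤ 1/2 for all i. -/
/-!
Write `P j = a_1 ⋯ a_j`. Since every `a_k ≥ 2`, the terms `1 / P j` are positive and strictly
decreasing, so `q_i` is a finite alternating series with strictly decreasing positive terms:
it lies strictly between `0` and its first term `1 / P i ≤ 1 / 2`. The bounds follow by
downward induction on `i` from `q_i = 1 / P i - q_{i+1}`.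
-/

open Finset

theorem sum_Icc_alternating_eq_sub {α : Type*} [CommRing α] {b : ℕ → α} {i N : ℕ}
    (hiN : i ≤ N) :
    ∑ j ∈ Icc i N, (-1 : α) ^ (j - i) * b j =
      b i - ∑ j ∈ Icc (i + 1) N, (-1 : α) ^ (j - (i + 1)) * b j := by
  rw [Icc_eq_cons_Ioc hiN, sum_cons, ← Icc_add_one_left_eq_Ioc, Nat.sub_self, pow_zero, one_mul,
    sub_eq_add_neg, ← sum_neg_distrib]
  congr 1
  refine sum_congr rfl fun j hj => ?_
  rw [show j - i = j - (i + 1) + 1 by grind, pow_succ]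
  ring

theorem sum_Icc_alternating_pos_and_le {α : Type*} [CommRing α] [LinearOrder α]
    [IsStrictOrderedRing α] {b : ℕ → α} {i N : ℕ} (hiN : i ≤ N) (hlast : 0 < b N)
    (hanti : ∀ j, j < N → b (j + 1) < b j) :
    0 < ∑ j ∈ Icc i N, (-1 : α) ^ (j - i) * b j ∧
      ∑ j ∈ Icc i N, (-1 : α) ^ (j - i) * b j ≤ b i := by
  induction hiN using Nat.decreasingInduction with
  | self => simp [hlast]
  | of_succ k hk ih =>
    rw [sum_Icc_alternating_eq_sub hk.le]
    have hstep := hanti k hk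
    constructor <;> linarith [ih.1, ih.2]

theorem two_pow_le_prod_Icc {α : Type*} [CommSemiring α] [PartialOrder α] [IsOrderedRing α]
    {c : ℕ → α} {n : ℕ} (hc : ∀ k ∈ Icc 1 n, 2 ≤ c k) :
    2 ^ n ≤ ∏ k ∈ Icc 1 n, c k := by
  calc (2 : α) ^ n = ∏ _k ∈ Icc 1 n, (2 : α) := by simp
    _ ≤ ∏ k ∈ Icc 1 n, c k := prod_le_prod (fun _ _ => zero_le_two) hc

theorem chain_weights_bounds_general (N : ℕ) (a : ℕ → ℤ)
    (ha : ∀ i, 1 ≤ i → i ≤ N → 2 ≤ a i) (q : ℕ → ℚ)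
    (hq : ∀ i, 1 ≤ i → i ≤ N →
      q i = ∑ j ∈ Finset.Icc i N, (-1 : ℚ) ^ (j - i) / ∏ k ∈ Finset.Icc 1 j, (a k : ℚ)) :
    ∀ i, 1 ≤ i → i ≤ N → 0 < q i ∧ q i ≤ 1 / 2 := by
  intro i hi hiN
  set P : ℕ → ℚ := fun j => ∏ k ∈ Icc 1 j, (a k : ℚ)
  have hP : ∀ j ≤ N, 2 ^ j ≤ P j := fun j hj =>
    two_pow_le_prod_Icc fun k hk => by
      simp only [mem_Icc] at hk
      exact_mod_cast ha k hk.1 (hk.2.trans hj)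
  have hPpos : ∀ j ≤ N, 0 < P j := fun j hj => (pow_pos two_pos j).trans_le (hP j hj)
  have hPsucc : ∀ j < N, P j < P (j + 1) := fun j hj => by
    have hstep : P (j + 1) = P j * a (j + 1) := prod_Icc_succ_top (by omega) _
    have ha' : (2 : ℚ) ≤ a (j + 1) := by exact_mod_cast ha (j + 1) (by omega) hj
    nlinarith [hPpos j hj.le]
  obtain ⟨hpos, hle⟩ := sum_Icc_alternating_pos_and_le (b := fun j => (P j)⁻¹) hiN
    (inv_pos.mpr (hPpos N le_rfl))
    (fun j hj => inv_strictAnti₀ (hPpos j hj.le) (hPsucc j hj))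
  simp only [← div_eq_mul_inv] at hpos hle
  have hPi : 2 ≤ P i := (le_self_pow₀ one_le_two (by omega)).trans (hP i hiN)
  rw [hq i hi hiN]
  exact ⟨hpos, hle.trans (inv_anti₀ two_pos hPi |>.trans_eq (one_div 2).symm)⟩

/-- For the chain type polynomial with all `a_i ≥ 2`, the reduced weights
`q_i = ∑_{j=i}^N (-1)^{j-i}/(a_1⋯a_j)` satisfy `0 < q_i ≤ 1/2` for all `i`. -/
theorem chain_weights_bounds (N : ℕ) (hN : 1 ≤ N) (a : ℕ → ℤ)
    (ha : ∀ i, 1 ≤ i → i ≤ N → 2 ≤ a i) (q : ℕ → ℚ)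
    (hq : ∀ i, 1 ≤ i → i ≤ N →
      q i = ∑ j ∈ Finset.Icc i N, (-1 : ℚ) ^ (j - i) / ∏ k ∈ Finset.Icc 1 j, (a k : ℚ)) :
    ∀ i, 1 ≤ i → i ≤ N → 0 < q i ∧ q i ≤ 1 / 2 :=
  chain_weights_bounds_general N a ha q hq
end

section
/- Under the CY condition Σ q_k = 1, for a sector element with g ≠ id, integer ages age(g), age(g^{-1}) ≥ 1, N_g = dim Fix(g), and deg p ≤ ĉ(f^g) = Σ_{k ∈ I_g}(1 - 2q_k), the left charge q_l = deg p - Σ_{k ∈ I_g^c} q_k + age(g) satisfies q_l ≤ N - 2 - Σ_{k ∈ I_g} q_k ≤ N - 2. -/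
theorem left_charge_le_general (N : ℕ) (q : Fin N → ℚ) (hq : ∀ k, 0 < q k)
    (hCY : ∑ k, q k = 1) (Ig : Finset (Fin N)) (ageg ageginv : ℤ)
    (hag' : 1 ≤ ageginv)
    (hsum : (ageg : ℚ) + (ageginv : ℚ) = (N : ℚ) - Ig.card)
    (degp : ℚ) (hdeg : degp ≤ ∑ k ∈ Ig, (1 - 2 * q k))
    (ql : ℚ) (hql : ql = degp - (∑ k ∈ Igᶜ, q k) + ageg) :
    ql ≤ (N : ℚ) - 2 - ∑ k ∈ Ig, q k ∧ ql ≤ (N : ℚ) - 2 := by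
  have hcompl : ∑ k ∈ Igᶜ, q k = 1 - ∑ k ∈ Ig, q k :=
    eq_sub_of_add_eq' (by rw [Finset.sum_add_sum_compl, hCY])
  have hcharge : ∑ k ∈ Ig, (1 - 2 * q k) = Ig.card - 2 * ∑ k ∈ Ig, q k := by
    simp [Finset.sum_sub_distrib, Finset.mul_sum]
  have hfixed_nonneg : 0 ≤ ∑ k ∈ Ig, q k := Finset.sum_nonneg fun k _ => (hq k).le
  have hageginv : (1 : ℚ) ≤ ageginv := by exact_mod_cast hag'
  have hbound : ql ≤ N - 2 - ∑ k ∈ Ig, q k := by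
    rw [hql, hcompl]
    linarith
  exact ⟨hbound, by linarith⟩

/-- Under the CY condition `∑ q_k = 1`, for `g ≠ id` with integer ages
`age(g), age(g⁻¹) ≥ 1`, `age(g) + age(g⁻¹) = N - N_g` and
`deg p ≤ ĉ(f^g) = ∑_{k ∈ I_g}(1 - 2 q_k)`, the left charge
`q_l = deg p - ∑_{k ∈ I_g^c} q_k + age(g)` satisfies
`q_l ≤ N - 2 - ∑_{k ∈ I_g} q_k ≤ N - 2`. -/
theorem left_charge_le (N : ℕ) (q : Fin N → ℚ) (hq : ∀ k, 0 < q k)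
    (hCY : ∑ k, q k = 1) (Ig : Finset (Fin N)) (ageg ageginv : ℤ)
    (hag : 1 ≤ ageg) (hag' : 1 ≤ ageginv)
    (hsum : (ageg : ℚ) + (ageginv : ℚ) = (N : ℚ) - Ig.card)
    (degp : ℚ) (hdeg : degp ≤ ∑ k ∈ Ig, (1 - 2 * q k))
    (ql : ℚ) (hql : ql = degp - (∑ k ∈ Igᶜ, q k) + ageg) :
    ql ≤ (N : ℚ) - 2 - ∑ k ∈ Ig, q k ∧ ql ≤ (N : ℚ) - 2 :=
  left_charge_le_general N q hq hCY Ig ageg ageginv hag' hsum degp hdeg ql hql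
end
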